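/- Let f be a function on (a, b] that is Riemann integrable on [c, b] for every c ∈ (a, b), such that the improper integral ∫_{a+}^b f exists, and suppose there is a monotone decreasing function M on (a, b] with |f(x)| ≤ M(x) on (a, b] and ∫_{a+}^b M < ∞. Then (1/n) Σ_k f(k/n) → ∫_{a+}^b f as n → ∞, where the sum runs over all integers k satisfying a·n + 1 < k < b·n. -/

import Mathlib

/-!
A Riemann sum `(1/n) ∑ F(k/n)` is the integral of the step function `x ↦ F(⌈n x⌉ / n)`, and
`⌈n x⌉ / n → x`. For `c ∈ (a, b)`, dominated convergence therefore sends the part of the sum with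
`k/n ∈ (c, b)` to `∫_c^b f`, as `f` is bounded and almost everywhere continuous on `[c, b]`.
Each remaining term is at most `M(k/n)/n ≤ ∫_{(k-1)/n}^{k/n} M` since `M` is antitone, and these
cells lie in `(a, c]` because `k > a n + 1`; so the remaining terms contribute at most `∫_a^c M`.
This tends to `0` as `c → a⁺`, because `M ≥ ‖f‖ ≥ 0` has a finite improper integral and is
therefore integrable on `(a, b]`.
-/

open MeasureTheory Filter Set intervalIntegral
open scoped Real Topology

/-- `f` is Riemann integrable on `[a,b]`: bounded there and (by Lebesgue's criterion)
continuous at almost every point of `[a,b]`. -/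
def RiemannIntegrableOn (f : ℝ → ℂ) (a b : ℝ) : Prop :=
  (∃ M : ℝ, ∀ x ∈ Set.Icc a b, ‖f x‖ ≤ M) ∧
    ∀ᵐ x ∂(volume.restrict (Set.Icc a b)), ContinuousWithinAt f (Set.Icc a b) x

theorem Metric.tendsto_of_eventually_approx {ι κ E : Type*} [PseudoMetricSpace E]
    {l : Filter ι} {l' : Filter κ} [l'.NeBot] {S : ι → E} {A : κ → ι → E} {α : κ → E}
    {β : κ → ℝ} {L : E} (hα : Tendsto α l' (𝓝 L)) (hβ : Tendsto β l' (𝓝 0))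
    (hA : ∀ᶠ c in l', Tendsto (A c) l (𝓝 (α c)) ∧ ∀ᶠ n in l, dist (S n) (A c n) ≤ β c) :
    Tendsto S l (𝓝 L) := by
  refine Metric.tendsto_nhds.2 fun ε hε ↦ ?_
  have hε3 : 0 < ε / 3 := by positivity
  obtain ⟨c, hαc, hβc, hAc, hSA⟩ := ((Metric.tendsto_nhds.1 hα _ hε3).and
    ((hβ.eventually (gt_mem_nhds hε3)).and hA)).exists
  filter_upwards [Metric.tendsto_nhds.1 hAc _ hε3, hSA] with n hAn hSn
  calc dist (S n) L ≤ dist (S n) (A c n) + dist (A c n) (α c) + dist (α c) L :=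
        dist_triangle4 _ _ _ _
    _ < ε := by linarith

section CeilGrid

variable {n : ℝ}

theorem mem_Ioc_div_iff_ceil_mul_eq (hn : 0 < n) {x : ℝ} {k : ℤ} :
    x ∈ Ioc ((k - 1) / n) (k / n) ↔ ⌈n * x⌉ = k := by
  rw [Int.ceil_eq_iff, mem_Ioc, div_lt_iff₀ hn, le_div_iff₀ hn, mul_comm x]

theorem mem_Ioc_ceil_mul_div (hn : 0 < n) (x : ℝ) :
    x ∈ Ioc ((⌈n * x⌉ - 1) / n) (⌈n * x⌉ / n) :=
  (mem_Ioc_div_iff_ceil_mul_eq hn).2 rfl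

theorem indicator_ceil_mul_eq_sum {E : Type*} [AddCommMonoid E] (hn : 0 < n) (s : Finset ℤ)
    (g : ℤ → E) (x : ℝ) :
    (s : Set ℤ).indicator g ⌈n * x⌉ =
      ∑ k ∈ s, (Ioc ((k - 1) / n) (k / n)).indicator (fun _ ↦ g k) x := by
  simp_rw [indicator_apply, mem_Ioc_div_iff_ceil_mul_eq hn, Finset.sum_ite_eq, Finset.mem_coe]

theorem integral_indicator_ceil_mul {E : Type*} [NormedAddCommGroup E] [NormedSpace ℝ E]
    [CompleteSpace E] (hn : 0 < n) (s : Finset ℤ) (g : ℤ → E) :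
    ∫ x, (s : Set ℤ).indicator g ⌈n * x⌉ = n⁻¹ • ∑ k ∈ s, g k := by
  simp_rw [indicator_ceil_mul_eq_sum hn, Finset.smul_sum]
  rw [integral_finsetSum _ fun k _ ↦ (integrable_indicator_iff measurableSet_Ioc).2
    (integrableOn_const measure_Ioc_lt_top.ne)]
  refine Finset.sum_congr rfl fun k _ ↦ ?_
  have hlength : (k / n - (k - 1) / n : ℝ) = n⁻¹ := by field_simp; ring
  rw [integral_indicator_const _ measurableSet_Ioc, measureReal_def, Real.volume_Ioc, hlength,
    ENNReal.toReal_ofReal (by positivity)]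

theorem Int.mem_Ioo_floor_ceil {x y : ℝ} {k : ℤ} :
    k ∈ Finset.Ioo ⌊x⌋ ⌈y⌉ ↔ x < k ∧ (k : ℝ) < y := by
  simp [Int.floor_lt, Int.lt_ceil]

end CeilGrid

theorem tendsto_ceil_mul_div (x : ℝ) :
    Tendsto (fun n : ℕ ↦ (⌈(n : ℝ) * x⌉ : ℝ) / n) atTop (𝓝 x) := by
  have hupper : Tendsto (fun n : ℕ ↦ x + 1 / (n : ℝ)) atTop (𝓝 x) := by
    simpa using tendsto_one_div_atTop_nhds_zero_nat.const_add x
  refine tendsto_of_tendsto_of_tendsto_of_le_of_le' tendsto_const_nhds hupper ?_ ?_ <;>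
    filter_upwards [eventually_gt_atTop 0] with n hn <;>
    have hx := mem_Ioc_ceil_mul_div (Nat.cast_pos.2 hn) x
  · exact hx.2
  · rw [sub_div] at hx
    linarith [hx.1]

theorem tendsto_integral_comp_ceil_mul_div {E : Type*} [NormedAddCommGroup E] [NormedSpace ℝ E]
    {F : ℝ → E} {C c b : ℝ} (hFC : ∀ x, ‖F x‖ ≤ C) (hF : Function.support F ⊆ Icc c b)
    (hFc : ∀ᵐ x, ContinuousAt F x) :
    Tendsto (fun n : ℕ ↦ ∫ x, F (⌈(n : ℝ) * x⌉ / n)) atTop (𝓝 (∫ x, F x)) := by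
  refine tendsto_integral_filter_of_dominated_convergence ((Icc (c - 1) b).indicator fun _ ↦ C)
    (Eventually.of_forall fun n ↦ ?_) ?_ ?_ ?_
  · exact ((StronglyMeasurable.of_discrete (f := fun k : ℤ ↦ F (k / n))).comp_measurable
      (Int.measurable_ceil.comp (measurable_const_mul _))).aestronglyMeasurable
  · filter_upwards [eventually_gt_atTop 0] with n hn
    refine Eventually.of_forall fun x ↦ ?_
    by_cases hFx : F (⌈(n : ℝ) * x⌉ / n) = 0
    · rw [hFx, norm_zero]
      exact indicator_nonneg (fun _ _ ↦ (norm_nonneg _).trans (hFC 0)) x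
    · have hcell := mem_Ioc_ceil_mul_div (Nat.cast_pos.2 hn) x
      have hsupp := hF hFx
      have hmesh : (1 : ℝ) / n ≤ 1 := div_le_one_of_le₀ (Nat.one_le_cast.2 hn) n.cast_nonneg
      rw [sub_div] at hcell
      have hx : x ∈ Icc (c - 1) b := ⟨by linarith [hcell.1, hsupp.1], hcell.2.trans hsupp.2⟩
      rw [indicator_of_mem hx]
      exact hFC _
  · exact (integrable_indicator_iff measurableSet_Icc).2 (integrableOn_const measure_Icc_lt_top.ne)
  · filter_upwards [hFc] with x hx using hx.tendsto.comp (tendsto_ceil_mul_div x)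

namespace RiemannIntegrableOn

variable {f : ℝ → ℂ} {c b : ℝ}

theorem ae_continuousAt_indicator_Ioo (hf : RiemannIntegrableOn f c b) :
    ∀ᵐ x, ContinuousAt ((Ioo c b).indicator f) x := by
  have hends : ∀ᵐ x : ℝ, x ∉ ({c, b} : Set ℝ) := (toFinite _).countable.ae_notMem _
  filter_upwards [(ae_restrict_iff' measurableSet_Icc).1 hf.2, hends] with x hcont hx
  by_cases hmem : x ∈ Icc c b
  · have hIoo : x ∈ Ioo c b := by
      rw [← Icc_sdiff_both]; exact ⟨hmem, hx⟩
    have hEq : EqOn f ((Ioo c b).indicator f) (Ioo c b) := fun y hy ↦ (indicator_of_mem hy f).symm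
    exact ((hcont hmem).continuousAt (Icc_mem_nhds hIoo.1 hIoo.2)).congr
      (hEq.eventuallyEq_of_mem (isOpen_Ioo.mem_nhds hIoo))
  · refine continuousAt_const.congr (f := fun _ ↦ 0) ?_
    filter_upwards [isClosed_Icc.isOpen_compl.mem_nhds hmem] with y hy
    exact (indicator_of_notMem (fun h ↦ hy (Ioo_subset_Icc_self h)) f).symm

theorem tendsto_riemannSum (hcb : c ≤ b) (hf : RiemannIntegrableOn f c b) :
    Tendsto (fun n : ℕ ↦ (1 / n : ℂ) * ∑ k ∈ Finset.Ioo ⌊c * n⌋ ⌈b * n⌉, f (k / n)) atTop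
      (𝓝 (∫ x in c..b, f x)) := by
  obtain ⟨C, hC⟩ := hf.1
  have hFC : ∀ x, ‖(Ioo c b).indicator f x‖ ≤ C := by
    intro x
    by_cases hx : x ∈ Ioo c b
    · rw [indicator_of_mem hx]; exact hC x (Ioo_subset_Icc_self hx)
    · rw [indicator_of_notMem hx, norm_zero]; exact (norm_nonneg _).trans (hC c ⟨le_rfl, hcb⟩)
  have hlim := tendsto_integral_comp_ceil_mul_div hFC
    (support_indicator_subset.trans Ioo_subset_Icc_self) hf.ae_continuousAt_indicator_Ioo
  rw [MeasureTheory.integral_indicator measurableSet_Ioo, ← integral_Ioc_eq_integral_Ioo,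
    ← integral_of_le hcb] at hlim
  refine hlim.congr' ?_
  filter_upwards [eventually_gt_atTop 0] with n hn
  have hn : (0 : ℝ) < n := Nat.cast_pos.2 hn
  have hstep : ∀ x : ℝ, (Ioo c b).indicator f (⌈(n : ℝ) * x⌉ / n) =
      (↑(Finset.Ioo ⌊c * n⌋ ⌈b * n⌉) : Set ℤ).indicator (fun k ↦ f (k / n)) ⌈(n : ℝ) * x⌉ := by
    intro x
    simp only [indicator_apply, Finset.mem_coe, Int.mem_Ioo_floor_ceil, mem_Ioo, lt_div_iff₀ hn,
      div_lt_iff₀ hn]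
  simp_rw [hstep, integral_indicator_ceil_mul hn, Complex.real_smul]
  push_cast
  ring

end RiemannIntegrableOn

theorem AntitoneOn.inv_mul_sum_le_setIntegral {M : ℝ → ℝ} {a c n : ℝ} (hn : 0 < n)
    (hM : AntitoneOn M (Ioc a c)) (hM0 : ∀ x ∈ Ioc a c, 0 ≤ M x) (hMi : IntegrableOn M (Ioc a c))
    {s : Finset ℤ} (hs : ∀ k ∈ s, Ioc ((k - 1) / n) (k / n) ⊆ Ioc a c) :
    n⁻¹ * ∑ k ∈ s, M (k / n) ≤ ∫ x in Ioc a c, M x := by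
  have hgrid : ∀ k ∈ s, (k : ℝ) / n ∈ Ioc a c := fun k hk ↦
    hs k hk (right_mem_Ioc.2 (div_lt_div_of_pos_right (sub_one_lt _) hn))
  rw [← smul_eq_mul, ← integral_indicator_ceil_mul hn,
    ← MeasureTheory.integral_indicator measurableSet_Ioc]
  refine integral_mono_of_nonneg (Eventually.of_forall fun x ↦ ?_)
    ((integrable_indicator_iff measurableSet_Ioc).2 hMi) (Eventually.of_forall fun x ↦ ?_)
  · exact indicator_nonneg (fun k hk ↦ hM0 _ (hgrid k hk)) _
  · dsimp only
    by_cases hk : ⌈n * x⌉ ∈ s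
    · have hcell := mem_Ioc_ceil_mul_div hn x
      have hx : x ∈ Ioc a c := hs _ hk hcell
      rw [indicator_of_mem (Finset.mem_coe.2 hk), indicator_of_mem hx]
      exact hM hx (hgrid _ hk) hcell.2
    · rw [indicator_of_notMem (Finset.mem_coe.not.2 hk)]
      exact indicator_nonneg hM0 x

theorem tendsto_setIntegral_Ioc_nhdsGT {E : Type*} [NormedAddCommGroup E] [NormedSpace ℝ E]
    {g : ℝ → E} {a b : ℝ} (hab : a < b) (hg : IntegrableOn g (Ioc a b)) :
    Tendsto (fun c ↦ ∫ x in Ioc a c, g x) (𝓝[>] a) (𝓝 0) := by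
  have hcont : ContinuousWithinAt (fun c ↦ ∫ x in a..c, g x) (Icc a b) a :=
    continuousWithinAt_primitive (measure_singleton a)
      (by rwa [min_self, max_eq_right hab.le, intervalIntegrable_iff_integrableOn_Ioc_of_le hab.le])
  have hlim := hcont.tendsto
  rw [integral_same] at hlim
  rw [← nhdsWithin_Ioc_eq_nhdsGT hab]
  refine (hlim.mono_left (nhdsWithin_mono _ Ioc_subset_Icc_self)).congr' ?_
  filter_upwards [self_mem_nhdsWithin] with c hc using integral_of_le hc.1.le

theorem AntitoneOn.integrableOn_Ioc_of_tendsto_intervalIntegral {g : ℝ → ℝ} {a b K : ℝ}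
    (hab : a < b) (hg : AntitoneOn g (Ioc a b)) (hg0 : ∀ x ∈ Ioc a b, 0 ≤ g x)
    (hK : Tendsto (fun c ↦ ∫ x in c..b, g x) (𝓝[>] a) (𝓝 K)) : IntegrableOn g (Ioc a b) := by
  set c : ℕ → ℝ := fun i ↦ a + (b - a) * (1 / (i + 1)) with hc
  have hc_mem : ∀ i, c i ∈ Ioc a b := by
    intro i
    have hpos : (0 : ℝ) < 1 / (i + 1) := by positivity
    have hle : 1 / ((i : ℝ) + 1) ≤ 1 := div_le_one_of_le₀ (by simp) (by positivity)
    constructor <;> simp only [hc] <;> nlinarith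
  have hc_lim : Tendsto c atTop (𝓝[>] a) := by
    refine tendsto_nhdsWithin_iff.2 ⟨?_, Eventually.of_forall fun i ↦ (hc_mem i).1⟩
    simpa [hc] using (tendsto_one_div_add_atTop_nhds_zero_nat.const_mul (b - a)).const_add a
  obtain ⟨I, hI⟩ := (hK.comp hc_lim).isBoundedUnder_le
  refine integrableOn_Ioc_of_intervalIntegral_norm_bounded_left (I := I)
    (fun i ↦ ?_) (tendsto_nhdsWithin_iff.1 hc_lim).1 ?_
  · have hsub : Icc (c i) b ⊆ Ioc a b := (Icc_subset_Ioc_iff (hc_mem i).2).2 ⟨(hc_mem i).1, le_rfl⟩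
    exact ((hg.mono hsub).integrableOn_isCompact isCompact_Icc).mono_set Ioc_subset_Icc_self
  · filter_upwards [hI] with i hi
    rwa [setIntegral_congr_fun measurableSet_Ioc fun x hx ↦ Real.norm_of_nonneg
      (hg0 x ⟨(hc_mem i).1.trans hx.1, hx.2⟩), ← integral_of_le (hc_mem i).2]

theorem Finset.sum_Ioc_add_sum_Ioo {α M : Type*} [LinearOrder α] [LocallyFiniteOrder α]
    [AddCommMonoid M] (g : α → M) {a b c : α} (hab : a ≤ b) (hbc : b < c) :
    ∑ k ∈ Finset.Ioc a b, g k + ∑ k ∈ Finset.Ioo b c, g k = ∑ k ∈ Finset.Ioo a c, g k := by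
  have hdisj : Disjoint (Finset.Ioc a b) (Finset.Ioo b c) := Finset.disjoint_left.2
    fun _ hk hk' ↦ (Finset.mem_Ioc.1 hk).2.not_gt (Finset.mem_Ioo.1 hk').1
  have hunion : Finset.Ioc a b ∪ Finset.Ioo b c = Finset.Ioo a c := by
    rw [← Finset.coe_inj, Finset.coe_union, Finset.coe_Ioc, Finset.coe_Ioo, Finset.coe_Ioo,
      Ioc_union_Ioo_eq_Ioo hab hbc]
  rw [← Finset.sum_union hdisj, hunion]

theorem filter_Icc_ceil_floor_eq_Ioo {x y z : ℝ} (hxy : x ≤ y) :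
    (Finset.Icc ⌈x⌉ ⌊z⌋).filter (fun k : ℤ ↦ y < k ∧ (k : ℝ) < z) = Finset.Ioo ⌊y⌋ ⌈z⌉ := by
  ext k
  simp only [Finset.mem_filter, Finset.mem_Icc, Finset.mem_Ioo, Int.ceil_le, Int.le_floor,
    Int.floor_lt, Int.lt_ceil]
  exact ⟨And.right, fun h ↦ ⟨⟨by linarith [h.1], h.2.le⟩, h⟩⟩

theorem norm_riemannSum_Ioc_le_setIntegral {f : ℝ → ℂ} {M : ℝ → ℝ} {a c : ℝ} {n : ℕ}
    (hn : 0 < n) (hM : AntitoneOn M (Ioc a c)) (hMi : IntegrableOn M (Ioc a c))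
    (hfM : ∀ x ∈ Ioc a c, ‖f x‖ ≤ M x) :
    ‖(1 / n : ℂ) * ∑ k ∈ Finset.Ioc ⌊a * n + 1⌋ ⌊c * n⌋, f (k / n)‖ ≤ ∫ x in Ioc a c, M x := by
  have hn : (0 : ℝ) < n := Nat.cast_pos.2 hn
  have hcells : ∀ k ∈ Finset.Ioc ⌊a * n + 1⌋ ⌊c * n⌋,
      Ioc (((k : ℝ) - 1) / n) (k / n) ⊆ Ioc a c := by
    intro k hk
    rw [Finset.mem_Ioc, Int.floor_lt, Int.le_floor] at hk
    refine Ioc_subset_Ioc ?_ ?_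
    · rw [le_div_iff₀ hn]; linarith
    · rw [div_le_iff₀ hn]; exact hk.2
  calc _ ≤ (n : ℝ)⁻¹ * ∑ k ∈ Finset.Ioc ⌊a * n + 1⌋ ⌊c * n⌋, M (k / n) := by
        rw [norm_mul, norm_div, norm_one, Complex.norm_natCast, one_div]
        gcongr
        exact (norm_sum_le _ _).trans (Finset.sum_le_sum fun k hk ↦ hfM _ (hcells k hk
          (right_mem_Ioc.2 (div_lt_div_of_pos_right (sub_one_lt _) hn))))
    _ ≤ _ := hM.inv_mul_sum_le_setIntegral hn (fun x hx ↦ (norm_nonneg _).trans (hfM x hx)) hMi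
        hcells

/-- Special case of Lemma 2: `(1/n) ∑_{an+1 < k < bn} f(k/n) → ∫_{a+}^b f`. -/
theorem riemann_sums_omitting_first_tendsto
    (a b : ℝ) (hab : a < b) (f : ℝ → ℂ) (L : ℂ)
    (hRiem : ∀ c ∈ Set.Ioo a b, RiemannIntegrableOn f c b)
    (hL : Tendsto (fun c : ℝ => ∫ x in c..b, f x) (nhdsWithin a (Set.Ioi a)) (nhds L))
    (M : ℝ → ℝ) (hManti : AntitoneOn M (Set.Ioc a b))
    (hMmaj : ∀ x ∈ Set.Ioc a b, ‖f x‖ ≤ M x)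
    (hMfin : ∃ K : ℝ,
      Tendsto (fun c : ℝ => ∫ x in c..b, M x) (nhdsWithin a (Set.Ioi a)) (nhds K)) :
    Tendsto
      (fun n : ℕ => ((1 : ℂ) / n) *
        ∑ k ∈ (Finset.Icc ⌈a * n⌉ ⌊b * n⌋).filter
            (fun k : ℤ => a * n + 1 < (k : ℝ) ∧ (k : ℝ) < b * n),
          f ((k : ℝ) / n))
      atTop (nhds L) := by
  obtain ⟨K, hK⟩ := hMfin
  have hM0 : ∀ x ∈ Ioc a b, 0 ≤ M x := fun x hx ↦ (norm_nonneg _).trans (hMmaj x hx)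
  have hMi := hManti.integrableOn_Ioc_of_tendsto_intervalIntegral hab hM0 hK
  refine Metric.tendsto_of_eventually_approx
    (A := fun (c : ℝ) (n : ℕ) ↦ (1 / n : ℂ) * ∑ k ∈ Finset.Ioo ⌊c * n⌋ ⌈b * n⌉, f (k / n))
    hL (tendsto_setIntegral_Ioc_nhdsGT hab hMi) ?_
  filter_upwards [Ioo_mem_nhdsGT hab] with c hc
  have hca : Ioc a c ⊆ Ioc a b := Ioc_subset_Ioc_right hc.2.le
  refine ⟨(hRiem c hc).tendsto_riemannSum hc.2.le, ?_⟩
  have hlarge :=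
    (tendsto_natCast_atTop_atTop.const_mul_atTop (sub_pos.2 hc.1)).eventually_ge_atTop 1
  filter_upwards [hlarge, eventually_gt_atTop 0] with n hgap hn
  have hn' : (0 : ℝ) < n := Nat.cast_pos.2 hn
  rw [filter_Icc_ceil_floor_eq_Ioo (by linarith), ← Finset.sum_Ioc_add_sum_Ioo _
    (Int.floor_mono (by linarith)) (Int.floor_lt_ceil_of_lt (mul_lt_mul_of_pos_right hc.2 hn')),
    mul_add, dist_eq_norm, add_sub_cancel_right]
  exact norm_riemannSum_Ioc_le_setIntegral hn (hManti.mono hca) (hMi.mono_set hca)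
    fun x hx ↦ hMmaj x (hca hx)
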